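/- For all m, n ≥ 3, the strong odd chromatic number of I_y(G_m, G_n) satisfies 7 ≤ χ_so(I_y(G_m, G_n)) ≤ 17. -/

import Mathlib

open SimpleGraph

/-- A coloring `φ` of the vertices of `G` is a strong odd coloring if it is proper and,
for every vertex `v` and every color `c`, the number of neighbors of `v` colored `c`
is either zero or odd. -/
def IsStrongOddColoring {V α : Type*} (G : SimpleGraph V) (φ : V → α) : Prop :=
  (∀ u v : V, G.Adj u v → φ u ≠ φ v) ∧
  ∀ (v : V) (c : α),
    {u : V | G.Adj v u ∧ φ u = c}.ncard = 0 ∨ Odd {u : V | G.Adj v u ∧ φ u = c}.ncard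

/-- The strong odd chromatic number: the least `k` such that `G` admits a strong odd
coloring with `k` colors. -/
noncomputable def strongOddChromaticNumber {V : Type*} (G : SimpleGraph V) : ℕ :=
  sInf {k : ℕ | ∃ φ : V → Fin k, IsStrongOddColoring G φ}

/-- The join `G ∨ H` of two graphs: disjoint copies of `G` and `H` together with all
edges between them. -/
def joinGraph {V W : Type*} (G : SimpleGraph V) (H : SimpleGraph W) :
    SimpleGraph (V ⊕ W) where
  Adj x y :=
    match x, y with
    | Sum.inl a, Sum.inl b => G.Adj a b
    | Sum.inl _, Sum.inr _ => True
    | Sum.inr _, Sum.inl _ => True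
    | Sum.inr a, Sum.inr b => H.Adj a b
  symm := ⟨by rintro (a | a) (b | b) h <;> first | exact h.symm | trivial⟩
  loopless := ⟨by rintro (a | a) h <;> first | exact G.loopless.irrefl a h | exact H.loopless.irrefl a h⟩

/-- The wheel graph `W_n = C_n ∨ K_1`. -/
def wheelGraph (n : ℕ) : SimpleGraph (Fin n ⊕ Fin 1) :=
  joinGraph (cycleGraph n) (⊥ : SimpleGraph (Fin 1))

/-- `G_n = C_n ∨ K̄_2`; the two vertices of `K̄_2` are `x_n = Sum.inr 0` and
`y_n = Sum.inr 1`. -/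
def cycleJoinTwo (n : ℕ) : SimpleGraph (Fin n ⊕ Fin 2) :=
  joinGraph (cycleGraph n) (⊥ : SimpleGraph (Fin 2))

/-- The one point union of graphs `G` and `H`, obtained by identifying the vertex
`a` of `G` with the vertex `b` of `H` (the identified vertex is `Sum.inl a`). -/
def onePointUnion {V W : Type*} (G : SimpleGraph V) (H : SimpleGraph W) (a : V) (b : W) :
    SimpleGraph (V ⊕ {w : W // w ≠ b}) where
  Adj x y :=
    match x, y with
    | Sum.inl u, Sum.inl v => G.Adj u v
    | Sum.inl u, Sum.inr v => u = a ∧ H.Adj b v.1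
    | Sum.inr v, Sum.inl u => u = a ∧ H.Adj b v.1
    | Sum.inr u, Sum.inr v => H.Adj u.1 v.1
  symm := by
    refine ⟨?_⟩
    rintro (u | u) (v | v) h
    · exact h.symm
    · exact h
    · exact h
    · exact h.symm
  loopless := by
    refine ⟨?_⟩
    rintro (u | u) h
    · exact G.loopless.irrefl u h
    · exact H.loopless.irrefl u.1 h

/-- `I_y(G_m, G_n)`: the one point union of `G_m = C_m ∨ K̄_2` and `G_n = C_n ∨ K̄_2`
obtained by identifying the vertices `y_m` and `y_n`. -/
def Iy (m n : ℕ) :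
    SimpleGraph ((Fin m ⊕ Fin 2) ⊕ {w : Fin n ⊕ Fin 2 // w ≠ Sum.inr 1}) :=
  onePointUnion (cycleJoinTwo m) (cycleJoinTwo n) (Sum.inr 1) (Sum.inr 1)

/-- A planar embedding of a graph `G`: an injective placement of the vertices in the
plane together with, for each edge, an arc (injective path) joining the images of its
endpoints, such that arcs do not pass through images of other vertices and two arcs of
distinct edges meet only in common endpoints. -/
structure PlanarEmbedding {V : Type*} (G : SimpleGraph V) where
  vmap : V → ℝ × ℝ
  vmap_inj : Function.Injective vmap
  arc : ∀ u v : V, G.Adj u v → Path (vmap u) (vmap v)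
  arc_symm : ∀ (u v : V) (h : G.Adj u v), arc v u h.symm = (arc u v h).symm
  arc_inj : ∀ (u v : V) (h : G.Adj u v), Function.Injective (arc u v h)
  arc_vertex : ∀ (u v : V) (h : G.Adj u v) (w : V),
    vmap w ∈ Set.range (arc u v h) → w = u ∨ w = v
  arc_disjoint : ∀ (u v u' v' : V) (h : G.Adj u v) (h' : G.Adj u' v'),
    s(u, v) ≠ s(u', v') →
    Set.range (arc u v h) ∩ Set.range (arc u' v' h') ⊆
      ({vmap u, vmap v} ∩ {vmap u', vmap v'} : Set (ℝ × ℝ))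

/-- A graph is planar if it admits a planar embedding. -/
def IsPlanar {V : Type*} (G : SimpleGraph V) : Prop :=
  Nonempty (PlanarEmbedding G)

/-!
Upper bound: a cycle `C_k` (`k ≥ 3`) has a distance-two colouring with 8 colours in which every
colour class has odd size. Colour the two cycles of `I_y(G_m, G_n)` with disjoint copies of such a
palette, give `y` a new colour and each of the hubs `x_m`, `x_n` a colour from the other cycle's
palette: 17 colours. A cycle vertex then sees four distinct colours, a hub sees the odd colour
classes of its cycle, and `y` sees those of both cycles, which share no colour.

Lower bound: three consecutive vertices of a cycle get distinct colours, since otherwise the middle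
one sees a colour exactly twice. A colour used on both cycles would occur an odd number of times
around `x_m` and around `x_n`, hence an even, nonzero number of times around `y`. With the colour
of `y`, which is adjacent to every cycle vertex, this gives `3 + 3 + 1` colours.
-/

open Function

theorem Set.Subsingleton.ncard_eq_zero_or_odd {α : Type*} {s : Set α} (hs : s.Subsingleton) :
    s.ncard = 0 ∨ Odd s.ncard := by
  rcases hs.eq_empty_or_singleton with rfl | ⟨x, rfl⟩ <;> simp

theorem cycleGraph_adj_iff_val {m : ℕ} (hm : 2 ≤ m) {u v : Fin m} :
    (cycleGraph m).Adj u v ↔ u.val + 1 = v.val ∨ v.val + 1 = u.val ∨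
      (u.val + 1 = m ∧ v.val = 0) ∨ (v.val + 1 = m ∧ u.val = 0) := by
  obtain ⟨k, rfl⟩ : ∃ k, m = k + 2 := ⟨m - 2, by omega⟩
  rw [cycleGraph_adj, sub_eq_iff_eq_add, sub_eq_iff_eq_add, Fin.ext_iff, Fin.ext_iff,
    Fin.val_add_eq_ite, Fin.val_add_eq_ite, Fin.val_one]
  have := u.isLt; have := v.isLt
  split_ifs <;> omega

section StrongOddColoring

variable {V α β : Type*} {G : SimpleGraph V} {φ : V → α}

theorem IsStrongOddColoring.comp_injective (hφ : IsStrongOddColoring G φ) {e : α → β}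
    (he : Injective e) : IsStrongOddColoring G (e ∘ φ) := by
  refine ⟨fun u v huv => he.ne (hφ.1 u v huv), fun v c => ?_⟩
  by_cases hc : c ∈ Set.range e
  · obtain ⟨c, rfl⟩ := hc
    simpa only [comp_apply, he.eq_iff] using hφ.2 v c
  · left
    convert Set.ncard_empty V
    exact Set.eq_empty_of_forall_notMem fun u hu => hc ⟨φ u, hu.2⟩

theorem strongOddChromaticNumber_le_card [Fintype α] (hφ : IsStrongOddColoring G φ) :
    strongOddChromaticNumber G ≤ Fintype.card α :=
  Nat.sInf_le ⟨_, hφ.comp_injective (Fintype.equivFin α).injective⟩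

theorem le_strongOddChromaticNumber [Fintype α] (hφ : IsStrongOddColoring G φ) {b : ℕ}
    (hb : ∀ k (ψ : V → Fin k), IsStrongOddColoring G ψ → b ≤ k) :
    b ≤ strongOddChromaticNumber G :=
  le_csInf ⟨_, _, hφ.comp_injective (Fintype.equivFin α).injective⟩
    fun k ⟨ψ, hψ⟩ => hb k ψ hψ

theorem IsStrongOddColoring.odd_ncard_of_adj [Finite V] (hφ : IsStrongOddColoring G φ)
    {v u : V} (h : G.Adj v u) : Odd {w | G.Adj v w ∧ φ w = φ u}.ncard :=
  (hφ.2 v (φ u)).resolve_left (Set.ncard_ne_zero_of_mem ⟨h, rfl⟩)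

theorem IsStrongOddColoring.apply_ne_of_adj_of_adj (hφ : IsStrongOddColoring G φ)
    {v u w : V} (hu : G.Adj v u) (hw : G.Adj v w) (huw : u ≠ w)
    (hN : ∀ x, G.Adj v x → x ≠ u → x ≠ w → G.Adj u x) : φ u ≠ φ w := by
  intro h
  have hpair : {x | G.Adj v x ∧ φ x = φ u} = {u, w} := by
    ext x
    simp only [Set.mem_ofPred_eq, Set.mem_insert_iff, Set.mem_singleton_iff]
    refine ⟨fun ⟨hx, hxu⟩ => ?_, ?_⟩
    · by_contra! hne
      exact hφ.1 u x (hN x hx hne.1 hne.2) hxu.symm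
    · rintro (rfl | rfl)
      exacts [⟨hu, rfl⟩, ⟨hw, h.symm⟩]
  have := hφ.2 v (φ u)
  rw [hpair, Set.ncard_pair huw] at this
  simp [Nat.odd_iff] at this

theorem ncard_adj_and_eq_zero_or_odd_of_injOn {v : V} (h : Set.InjOn φ (G.neighborSet v))
    (c : α) :
    {u | G.Adj v u ∧ φ u = c}.ncard = 0 ∨ Odd {u | G.Adj v u ∧ φ u = c}.ncard :=
  Set.Subsingleton.ncard_eq_zero_or_odd fun _ hx _ hy => h hx.1 hy.1 (hx.2.trans hy.2.symm)

theorem ncard_adj_and_eq_of_neighborSet_eq_range {ι : Type*} {e : ι → V} (he : Injective e)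
    {v : V} (h : G.neighborSet v = Set.range e) (c : α) :
    {u | G.Adj v u ∧ φ u = c}.ncard = {i | φ (e i) = c}.ncard := by
  change (G.neighborSet v ∩ φ ⁻¹' {c}).ncard = _
  rw [h, ← Set.image_preimage_eq_range_inter, Set.ncard_image_of_injective _ he]
  rfl

theorem ncard_adj_and_eq_of_neighborSet_eq_union [Finite V] {v v₁ v₂ : V}
    (h : G.neighborSet v = G.neighborSet v₁ ∪ G.neighborSet v₂)
    (hd : Disjoint (G.neighborSet v₁) (G.neighborSet v₂)) (c : α) :
    {u | G.Adj v u ∧ φ u = c}.ncard =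
      {u | G.Adj v₁ u ∧ φ u = c}.ncard + {u | G.Adj v₂ u ∧ φ u = c}.ncard := by
  change (G.neighborSet v ∩ φ ⁻¹' {c}).ncard =
    (G.neighborSet v₁ ∩ φ ⁻¹' {c}).ncard + (G.neighborSet v₂ ∩ φ ⁻¹' {c}).ncard
  rw [h, Set.union_inter_distrib_right,
    Set.ncard_union_eq (hd.mono Set.inter_subset_left Set.inter_subset_left)]

theorem IsStrongOddColoring.injective_comp_castLE (hφ : IsStrongOddColoring G φ) {m : ℕ}
    (hm : 3 ≤ m) {e : Fin m → V} (he : Injective e)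
    (hadj : ∀ i i', (cycleGraph m).Adj i i' → G.Adj (e i) (e i'))
    (hN : ∀ i u, G.Adj (e i) u →
      (∃ i', (cycleGraph m).Adj i i' ∧ e i' = u) ∨ ∀ i', G.Adj (e i') u) :
    Injective (φ ∘ e ∘ Fin.castLE hm) := by
  have hc : ∀ k k' : Fin 3, k.val + 1 = k'.val →
      (cycleGraph m).Adj (Fin.castLE hm k) (Fin.castLE hm k') := fun k k' h =>
    (cycleGraph_adj_iff_val (by omega)).2 (Or.inl h)
  have h01 : φ (e (Fin.castLE hm 0)) ≠ φ (e (Fin.castLE hm 1)) :=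
    hφ.1 _ _ (hadj _ _ (hc 0 1 rfl))
  have h12 : φ (e (Fin.castLE hm 1)) ≠ φ (e (Fin.castLE hm 2)) :=
    hφ.1 _ _ (hadj _ _ (hc 1 2 rfl))
  have h02 : φ (e (Fin.castLE hm 0)) ≠ φ (e (Fin.castLE hm 2)) := by
    refine hφ.apply_ne_of_adj_of_adj ((hadj _ _ (hc 0 1 rfl)).symm) (hadj _ _ (hc 1 2 rfl))
      (he.ne (by simp [Fin.ext_iff])) fun x hx hx0 hx2 => ?_
    rcases hN _ x hx with ⟨i, hi, rfl⟩ | hx'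
    · rw [cycleGraph_adj_iff_val (by omega)] at hi
      obtain rfl | rfl : i = Fin.castLE hm 0 ∨ i = Fin.castLE hm 2 := by
        simp only [Fin.ext_iff, Fin.val_castLE] at hi ⊢
        omega
      exacts [absurd rfl hx0, absurd rfl hx2]
    · exact hx' _
  intro k k' h
  fin_cases k <;> fin_cases k' <;> simp_all

end StrongOddColoring

structure IsOddDistanceTwoColoring {V α : Type*} (G : SimpleGraph V) (f : V → α) : Prop where
  apply_ne_of_adj : ∀ ⦃u v⦄, G.Adj u v → f u ≠ f v
  injOn_neighborSet : ∀ v, Set.InjOn f (G.neighborSet v)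
  ncard_fiber : ∀ c, {u | f u = c}.ncard = 0 ∨ Odd {u | f u = c}.ncard

/-- Colours `0, 1, 2` repeat along the first `m - (m - 3) % 6` vertices, an odd multiple of `3`,
so each of these colour classes has odd size; the remaining (at most five) vertices get the fresh
colours `3, 4, …`. -/
def cyclePattern (m i : ℕ) : ℕ :=
  if i < m - (m - 3) % 6 then i % 3 else i + 3 - (m - (m - 3) % 6)

theorem cyclePattern_lt {m i : ℕ} (hm : 3 ≤ m) (hi : i < m) : cyclePattern m i < 8 := by
  unfold cyclePattern; split_ifs <;> omega

def cycleColoring (m : ℕ) (hm : 3 ≤ m) (i : Fin m) : Fin 8 :=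
  ⟨cyclePattern m i, cyclePattern_lt hm i.isLt⟩

theorem ncard_fiber_cycleColoring {m : ℕ} (hm : 3 ≤ m) (c : Fin 8) :
    {i | cycleColoring m hm i = c}.ncard = 0 ∨ Odd {i | cycleColoring m hm i = c}.ncard := by
  by_cases hc : c.val < 3
  · right
    have hfiber : Fin.val '' {i | cycleColoring m hm i = c} =
        ↑((Finset.range (m - (m - 3) % 6)).filter (· ≡ c.val [MOD 3])) := by
      ext k
      simp only [Finset.coe_filter, Finset.mem_range, Set.mem_image, Set.mem_ofPred_eq,
        cycleColoring, cyclePattern, Fin.ext_iff]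
      unfold Nat.ModEq
      constructor
      · rintro ⟨i, hi, rfl⟩
        have := i.isLt
        split_ifs at hi <;> omega
      · intro hk
        exact ⟨⟨k, by omega⟩, by dsimp only; split_ifs <;> omega, rfl⟩
    rw [← Set.ncard_image_of_injective _ Fin.val_injective, hfiber, Set.ncard_coe_finset,
      ← Nat.count_eq_card_filter_range, Nat.count_modEq_card _ (by norm_num)]
    rw [if_neg (by omega), Nat.odd_iff]
    omega
  · refine Set.Subsingleton.ncard_eq_zero_or_odd fun i hi j hj => Fin.ext ?_
    simp only [cycleColoring, cyclePattern, Fin.ext_iff, Set.mem_ofPred_eq] at hi hj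
    split_ifs at hi hj <;> omega

theorem isOddDistanceTwoColoring_cycleColoring {m : ℕ} (hm : 3 ≤ m) :
    IsOddDistanceTwoColoring (cycleGraph m) (cycleColoring m hm) where
  apply_ne_of_adj u v h := by
    rw [cycleGraph_adj_iff_val (by omega)] at h
    simp only [cycleColoring, cyclePattern, ne_eq, Fin.ext_iff]
    split_ifs <;> omega
  injOn_neighborSet v u hu w hw h := by
    simp only [mem_neighborSet, cycleGraph_adj_iff_val (by omega : 2 ≤ m)] at hu hw
    simp only [cycleColoring, cyclePattern, Fin.ext_iff] at h ⊢
    split_ifs at h <;> omega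
  ncard_fiber := ncard_fiber_cycleColoring hm

namespace Iy

abbrev Vert (m n : ℕ) : Type := (Fin m ⊕ Fin 2) ⊕ {w : Fin n ⊕ Fin 2 // w ≠ Sum.inr 1}

variable {m n : ℕ}

/-- `a i` and `b j` are the cycle vertices of `G_m` and `G_n`. -/
def a (i : Fin m) : Vert m n := Sum.inl (Sum.inl i)

def xm : Vert m n := Sum.inl (Sum.inr 0)

def y : Vert m n := Sum.inl (Sum.inr 1)

def b (j : Fin n) : Vert m n := Sum.inr ⟨Sum.inl j, Sum.inl_ne_inr⟩

def xn : Vert m n := Sum.inr ⟨Sum.inr 0, by simp⟩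

@[elab_as_elim]
theorem Vert.induction {motive : Vert m n → Prop} (ha : ∀ i, motive (a i)) (hxm : motive xm)
    (hy : motive y) (hb : ∀ j, motive (b j)) (hxn : motive xn) (v : Vert m n) : motive v := by
  rcases v with (i | j) | ⟨(j | j), hj⟩
  · exact ha i
  · fin_cases j
    exacts [hxm, hy]
  · exact hb j
  · obtain rfl : j = 0 := by
      fin_cases j
      · rfl
      · exact absurd rfl hj
    exact hxn

theorem a_injective : Injective (a : Fin m → Vert m n) := fun _ _ h => by
  simpa [a] using h

theorem b_injective : Injective (b : Fin n → Vert m n) := fun _ _ h => by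
  simpa [b] using h

@[simp]
theorem adj_a_a {i i' : Fin m} : (Iy m n).Adj (a i) (a i') ↔ (cycleGraph m).Adj i i' := Iff.rfl

@[simp]
theorem adj_b_b {j j' : Fin n} : (Iy m n).Adj (b j) (b j') ↔ (cycleGraph n).Adj j j' := Iff.rfl

theorem adj_a_iff {i : Fin m} {u : Vert m n} :
    (Iy m n).Adj (a i) u ↔
      (∃ i', (cycleGraph m).Adj i i' ∧ a i' = u) ∨ u = xm ∨ u = y := by
  induction u using Vert.induction <;>
    simp [Iy, onePointUnion, cycleJoinTwo, joinGraph, a, b, xm, xn, y]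

theorem adj_b_iff {j : Fin n} {u : Vert m n} :
    (Iy m n).Adj (b j) u ↔
      (∃ j', (cycleGraph n).Adj j j' ∧ b j' = u) ∨ u = y ∨ u = xn := by
  induction u using Vert.induction <;>
    simp [Iy, onePointUnion, cycleJoinTwo, joinGraph, a, b, xm, xn, y]

theorem neighborSet_xm : (Iy m n).neighborSet xm = Set.range a := by
  ext u
  induction u using Vert.induction <;>
    simp [Iy, onePointUnion, cycleJoinTwo, joinGraph, a, b, xm, xn, y]

theorem neighborSet_xn : (Iy m n).neighborSet xn = Set.range b := by
  ext u
  induction u using Vert.induction <;>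
    simp [Iy, onePointUnion, cycleJoinTwo, joinGraph, a, b, xm, xn, y]

theorem neighborSet_y :
    (Iy m n).neighborSet y = (Iy m n).neighborSet xm ∪ (Iy m n).neighborSet xn := by
  rw [neighborSet_xm, neighborSet_xn]
  ext u
  induction u using Vert.induction <;>
    simp [Iy, onePointUnion, cycleJoinTwo, joinGraph, a, b, xm, xn, y]

theorem disjoint_neighborSet_xm_xn :
    Disjoint ((Iy m n).neighborSet xm) ((Iy m n).neighborSet xn) := by
  rw [neighborSet_xm, neighborSet_xn, Set.disjoint_range_iff]
  simp [a, b]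

theorem adj_xm_a (i : Fin m) : (Iy m n).Adj xm (a i) := by
  rw [← mem_neighborSet, neighborSet_xm]
  exact ⟨i, rfl⟩

theorem adj_xn_b (j : Fin n) : (Iy m n).Adj xn (b j) := by
  rw [← mem_neighborSet, neighborSet_xn]
  exact ⟨j, rfl⟩

theorem adj_y_a (i : Fin m) : (Iy m n).Adj y (a i) := by
  rw [← mem_neighborSet, neighborSet_y]
  exact Or.inl (adj_xm_a (n := n) i)

theorem adj_y_b (j : Fin n) : (Iy m n).Adj y (b j) := by
  rw [← mem_neighborSet, neighborSet_y]
  exact Or.inr (adj_xn_b (m := m) j)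

section Coloring

variable {α : Type*}

def coloring (f : Fin m → α) (g : Fin n → α) (c₀ : α) : Vert m n → α ⊕ α ⊕ Unit
  | Sum.inl (Sum.inl i) => Sum.inl (f i)
  | Sum.inl (Sum.inr j) => if j = 0 then Sum.inr (Sum.inl c₀) else Sum.inr (Sum.inr ())
  | Sum.inr ⟨Sum.inl j, _⟩ => Sum.inr (Sum.inl (g j))
  | Sum.inr ⟨Sum.inr _, _⟩ => Sum.inl c₀

variable (f : Fin m → α) (g : Fin n → α) (c₀ : α)

@[simp] theorem coloring_a (i : Fin m) : coloring (n := n) f g c₀ (a i) = Sum.inl (f i) := rfl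
@[simp] theorem coloring_xm : coloring (n := n) f g c₀ xm = Sum.inr (Sum.inl c₀) := rfl
@[simp] theorem coloring_y : coloring (n := n) f g c₀ y = Sum.inr (Sum.inr ()) := rfl
@[simp] theorem coloring_b (j : Fin n) : coloring f g c₀ (b j) = Sum.inr (Sum.inl (g j)) := rfl
@[simp] theorem coloring_xn : coloring (m := m) f g c₀ xn = Sum.inl c₀ := rfl

variable {f g}

theorem injOn_coloring_neighborSet_a (hf : IsOddDistanceTwoColoring (cycleGraph m) f)
    (i : Fin m) : Set.InjOn (coloring (n := n) f g c₀) ((Iy m n).neighborSet (a i)) := by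
  intro u hu w hw huw
  rcases adj_a_iff.1 hu with ⟨i₁, hi₁, rfl⟩ | rfl | rfl <;>
    rcases adj_a_iff.1 hw with ⟨i₂, hi₂, rfl⟩ | rfl | rfl <;> simp at huw ⊢
  exact congrArg a (hf.injOn_neighborSet i hi₁ hi₂ huw)

theorem injOn_coloring_neighborSet_b (hg : IsOddDistanceTwoColoring (cycleGraph n) g)
    (j : Fin n) : Set.InjOn (coloring (m := m) f g c₀) ((Iy m n).neighborSet (b j)) := by
  intro u hu w hw huw
  rcases adj_b_iff.1 hu with ⟨j₁, hj₁, rfl⟩ | rfl | rfl <;>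
    rcases adj_b_iff.1 hw with ⟨j₂, hj₂, rfl⟩ | rfl | rfl <;> simp at huw ⊢
  exact congrArg b (hg.injOn_neighborSet j hj₁ hj₂ huw)

theorem coloring_ne_of_adj (hf : IsOddDistanceTwoColoring (cycleGraph m) f)
    (hg : IsOddDistanceTwoColoring (cycleGraph n) g) {u v : Vert m n} (huv : (Iy m n).Adj u v) :
    coloring f g c₀ u ≠ coloring f g c₀ v := by
  induction u using Vert.induction with
  | ha i =>
    rcases adj_a_iff.1 huv with ⟨i', hi', rfl⟩ | rfl | rfl
    · simpa using hf.apply_ne_of_adj hi'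
    all_goals simp
  | hxm =>
    rw [← mem_neighborSet, neighborSet_xm] at huv
    obtain ⟨i, rfl⟩ := huv
    simp
  | hy =>
    rw [← mem_neighborSet, neighborSet_y, neighborSet_xm, neighborSet_xn] at huv
    rcases huv with ⟨i, rfl⟩ | ⟨j, rfl⟩ <;> simp
  | hb j =>
    rcases adj_b_iff.1 huv with ⟨j', hj', rfl⟩ | rfl | rfl
    · simpa using hg.apply_ne_of_adj hj'
    all_goals simp
  | hxn =>
    rw [← mem_neighborSet, neighborSet_xn] at huv
    obtain ⟨j, rfl⟩ := huv
    simp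

theorem isStrongOddColoring_coloring (hf : IsOddDistanceTwoColoring (cycleGraph m) f)
    (hg : IsOddDistanceTwoColoring (cycleGraph n) g) :
    IsStrongOddColoring (Iy m n) (coloring f g c₀) := by
  refine ⟨fun u v huv => coloring_ne_of_adj c₀ hf hg huv, fun v c => ?_⟩
  induction v using Vert.induction with
  | ha i =>
    exact ncard_adj_and_eq_zero_or_odd_of_injOn (injOn_coloring_neighborSet_a c₀ hf i) c
  | hxm =>
    rw [ncard_adj_and_eq_of_neighborSet_eq_range a_injective neighborSet_xm]
    rcases c with c | c | _
    · simpa using hf.ncard_fiber c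
    all_goals simp
  | hy =>
    rw [ncard_adj_and_eq_of_neighborSet_eq_union neighborSet_y disjoint_neighborSet_xm_xn,
      ncard_adj_and_eq_of_neighborSet_eq_range a_injective neighborSet_xm,
      ncard_adj_and_eq_of_neighborSet_eq_range b_injective neighborSet_xn]
    rcases c with c | c | _
    · simpa using hf.ncard_fiber c
    · simpa using hg.ncard_fiber c
    · simp
  | hb j =>
    exact ncard_adj_and_eq_zero_or_odd_of_injOn (injOn_coloring_neighborSet_b c₀ hg j) c
  | hxn =>
    rw [ncard_adj_and_eq_of_neighborSet_eq_range b_injective neighborSet_xn]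
    rcases c with c | c | _
    · simp
    · simpa using hg.ncard_fiber c
    · simp

end Coloring

theorem apply_a_ne_apply_b {α : Type*} {φ : Vert m n → α}
    (hφ : IsStrongOddColoring (Iy m n) φ) (i : Fin m) (j : Fin n) : φ (a i) ≠ φ (b j) := by
  intro h
  have hxm := hφ.odd_ncard_of_adj (adj_xm_a (n := n) i)
  have hxn := hφ.odd_ncard_of_adj (adj_xn_b (m := m) j)
  have hy := hφ.odd_ncard_of_adj (adj_y_a (n := n) i)
  rw [ncard_adj_and_eq_of_neighborSet_eq_union neighborSet_y disjoint_neighborSet_xm_xn, h] at hy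
  rw [h] at hxm
  exact Nat.not_even_iff_odd.2 hy (hxm.add_odd hxn)

theorem seven_le_card {α : Type*} [Fintype α] (hm : 3 ≤ m) (hn : 3 ≤ n) {φ : Vert m n → α}
    (hφ : IsStrongOddColoring (Iy m n) φ) : 7 ≤ Fintype.card α := by
  have hA : Injective (φ ∘ a ∘ Fin.castLE hm) :=
    hφ.injective_comp_castLE hm a_injective (fun _ _ => adj_a_a.2) fun i u hu => by
      rcases adj_a_iff.1 hu with hu | rfl | rfl
      exacts [Or.inl hu, Or.inr fun i' => (adj_xm_a i').symm,
        Or.inr fun i' => (adj_y_a i').symm]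
  have hB : Injective (φ ∘ b ∘ Fin.castLE hn) :=
    hφ.injective_comp_castLE hn b_injective (fun _ _ => adj_b_b.2) fun j u hu => by
      rcases adj_b_iff.1 hu with hu | rfl | rfl
      exacts [Or.inl hu, Or.inr fun j' => (adj_y_b j').symm,
        Or.inr fun j' => (adj_xn_b j').symm]
  have hBy : Injective (Sum.elim (φ ∘ b ∘ Fin.castLE hn) fun _ : Unit => φ y) :=
    hB.sumElim (injective_of_subsingleton _) fun j _ => (hφ.1 _ _ (adj_y_b _)).symm
  have hABy := hA.sumElim hBy fun i => by
    rintro (j | _)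
    exacts [apply_a_ne_apply_b hφ _ _, (hφ.1 _ _ (adj_y_a _)).symm]
  simpa using Fintype.card_le_of_injective _ hABy

end Iy

/-- For all `m, n ≥ 3`, `7 ≤ χ_so(I_y(G_m, G_n)) ≤ 17`. -/
theorem stmt_10 (m n : ℕ) (hm : 3 ≤ m) (hn : 3 ≤ n) :
    7 ≤ strongOddChromaticNumber (Iy m n) ∧ strongOddChromaticNumber (Iy m n) ≤ 17 := by
  have hcol := Iy.isStrongOddColoring_coloring 0 (isOddDistanceTwoColoring_cycleColoring hm)
    (isOddDistanceTwoColoring_cycleColoring hn)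
  refine ⟨le_strongOddChromaticNumber hcol fun k ψ hψ => ?_, ?_⟩
  · simpa using Iy.seven_le_card hm hn hψ
  · simpa using strongOddChromaticNumber_le_card hcol
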